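/- arXiv:2406.08389 — 2 statements merged into one kernel-verified Lean document; each statement's English description precedes it below -/
import Mathlib

section
/- Let f : ℍ → ℍ be holomorphic and let z₀, w₀ ∈ ℍ be such that |f^[n](z₀)| → ∞, |f^[n](w₀)| → ∞, and ρ(f^[n](z₀), f^[n](w₀)) → 0 as n → ∞, where ρ is the pseudo-hyperbolic distance. Then Slope[f, z₀] = Slope[f, w₀]; that is, the sets of limit points of arg(f^[n](z₀)) and of arg(f^[n](w₀)) coincide. -/
/-! Write `z = r e^{iα}`, `w = s e^{iβ}` with `α, β ∈ (0, π)`. By the law of cosines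
`|z - w|² = r² + s² - 2rs cos(α - β)` and `|z - w̄|² = r² + s² - 2rs cos(α + β)`, and since
`r² + s² ≥ 2rs` this gives `sin²((α - β)/2) ≤ ρ(z, w)²`; Jordan's inequality then yields
`|α - β| ≤ π ρ(z, w)`. So the arguments of two orbits whose pseudo-hyperbolic distance tends to
`0` are asymptotic, and asymptotic sequences have the same subsequential limits. -/

open Filter Topology

def subseqLimits {X : Type*} [TopologicalSpace X] (u : ℕ → X) : Set X :=
  {s | ∃ φ : ℕ → ℕ, StrictMono φ ∧ Tendsto (u ∘ φ) atTop (𝓝 s)}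

theorem subseqLimits_eq_of_tendsto_dist {X : Type*} [PseudoMetricSpace X] {u v : ℕ → X}
    (h : Tendsto (fun n => dist (u n) (v n)) atTop (𝓝 0)) :
    subseqLimits u = subseqLimits v := by
  ext s
  refine exists_congr fun φ => and_congr_right fun hφ => tendsto_iff_of_dist ?_
  exact h.comp hφ.tendsto_atTop

noncomputable def pseudoHyperbolicDist (z w : ℂ) : ℝ :=
  ‖z - w‖ / ‖z - (starRingEnd ℂ) w‖

namespace Complex

theorem sq_norm_sub_eq (z w : ℂ) :
    ‖z - w‖ ^ 2 = ‖z‖ ^ 2 + ‖w‖ ^ 2 - 2 * ‖z‖ * ‖w‖ * Real.cos (z.arg - w.arg) := by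
  rw [Complex.sq_norm, normSq_apply, sub_re, sub_im, Real.cos_sub, ← norm_mul_cos_arg z,
    ← norm_mul_cos_arg w, ← norm_mul_sin_arg z, ← norm_mul_sin_arg w]
  linear_combination ‖z‖ ^ 2 * Real.sin_sq_add_cos_sq z.arg +
    ‖w‖ ^ 2 * Real.sin_sq_add_cos_sq w.arg

theorem sq_norm_sub_conj_eq (z w : ℂ) :
    ‖z - (starRingEnd ℂ) w‖ ^ 2 =
      ‖z‖ ^ 2 + ‖w‖ ^ 2 - 2 * ‖z‖ * ‖w‖ * Real.cos (z.arg + w.arg) := by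
  rw [Complex.sq_norm, normSq_apply, sub_re, sub_im, conj_re, conj_im, Real.cos_add,
    ← norm_mul_cos_arg z, ← norm_mul_cos_arg w, ← norm_mul_sin_arg z, ← norm_mul_sin_arg w]
  linear_combination ‖z‖ ^ 2 * Real.sin_sq_add_cos_sq z.arg +
    ‖w‖ ^ 2 * Real.sin_sq_add_cos_sq w.arg

theorem sin_sq_half_arg_sub_mul_le (z w : ℂ) :
    Real.sin ((z.arg - w.arg) / 2) ^ 2 * ‖z - (starRingEnd ℂ) w‖ ^ 2 ≤ ‖z - w‖ ^ 2 := by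
  have hsin : Real.sin ((z.arg - w.arg) / 2) ^ 2 = (1 - Real.cos (z.arg - w.arg)) / 2 := by
    rw [Real.sin_sq_eq_half_sub]; ring_nf
  rw [hsin, sq_norm_sub_conj_eq, sq_norm_sub_eq]
  set c := Real.cos (z.arg - w.arg)
  set d := Real.cos (z.arg + w.arg)
  have hrs : 0 ≤ ‖z‖ * ‖w‖ := by positivity
  have hAM : 2 * ‖z‖ * ‖w‖ ≤ ‖z‖ ^ 2 + ‖w‖ ^ 2 := two_mul_le_add_sq _ _
  have hc : 0 ≤ 1 + c := by linarith [Real.neg_one_le_cos (z.arg - w.arg)]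
  have hc' : 0 ≤ 1 - c := by linarith [Real.cos_le_one (z.arg - w.arg)]
  have hd : 0 ≤ 1 + d := by linarith [Real.neg_one_le_cos (z.arg + w.arg)]
  -- twice RHS - LHS is `(1 + c)(r² + s² - 2rs) + 2rs(1 - c)(1 + d)`, with `r = ‖z‖`, `s = ‖w‖`
  nlinarith [mul_nonneg hc (sub_nonneg.2 hAM), mul_nonneg hrs (mul_nonneg hc' hd)]

theorem abs_arg_sub_arg_le_pi_mul_pseudoHyperbolicDist {z w : ℂ} (hz : 0 < z.im)
    (hw : 0 < w.im) : |z.arg - w.arg| ≤ Real.pi * pseudoHyperbolicDist z w := by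
  have hconj : 0 < ‖z - (starRingEnd ℂ) w‖ := by
    refine norm_pos_iff.2 fun h => ?_
    have := congrArg im h
    simp only [sub_im, conj_im, zero_im] at this
    linarith
  have hsin : |Real.sin ((z.arg - w.arg) / 2)| ≤ pseudoHyperbolicDist z w := by
    refine abs_le_of_sq_le_sq ?_ (by unfold pseudoHyperbolicDist; positivity)
    rw [pseudoHyperbolicDist, div_pow, le_div_iff₀ (by positivity)]
    exact sin_sq_half_arg_sub_mul_le z w
  have hhalf : |(z.arg - w.arg) / 2| ≤ Real.pi / 2 := by
    have := arg_nonneg_iff.2 hz.le; have := arg_nonneg_iff.2 hw.le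
    have := arg_le_pi z; have := arg_le_pi w
    rw [abs_le]; constructor <;> linarith
  have hJordan := Real.mul_abs_le_abs_sin hhalf
  rw [abs_div, abs_two] at hJordan
  have hπ := Real.pi_pos
  calc |z.arg - w.arg| = Real.pi * (2 / Real.pi * (|z.arg - w.arg| / 2)) := by field_simp
    _ ≤ Real.pi * pseudoHyperbolicDist z w := by gcongr; exact hJordan.trans hsin

end Complex

theorem tendsto_dist_arg_of_pseudoHyperbolicDist_tendsto_zero {u v : ℕ → ℂ}
    (hu : ∀ n, 0 < (u n).im) (hv : ∀ n, 0 < (v n).im)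
    (h : Tendsto (fun n => pseudoHyperbolicDist (u n) (v n)) atTop (𝓝 0)) :
    Tendsto (fun n => dist (u n).arg (v n).arg) atTop (𝓝 0) := by
  refine squeeze_zero (fun _ => dist_nonneg) (fun n => ?_) (by simpa using h.const_mul Real.pi)
  exact (Real.dist_eq _ _).trans_le
    (Complex.abs_arg_sub_arg_le_pi_mul_pseudoHyperbolicDist (hu n) (hv n))

theorem slope_set_eq_of_pseudoHyperbolic_tendsto_zero_general (f : ℂ → ℂ)
    (hmaps : Set.MapsTo f {z : ℂ | 0 < z.im} {z : ℂ | 0 < z.im})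
    (z₀ w₀ : ℂ) (hz₀ : 0 < z₀.im) (hw₀ : 0 < w₀.im)
    (hρ : Tendsto (fun n => ‖f^[n] z₀ - f^[n] w₀‖ /
      ‖f^[n] z₀ - (starRingEnd ℂ) (f^[n] w₀)‖) atTop (nhds 0)) :
    {s : ℝ | ∃ φ : ℕ → ℕ, StrictMono φ ∧
        Tendsto (fun k => (f^[φ k] z₀).arg) atTop (nhds s)} =
      {s : ℝ | ∃ φ : ℕ → ℕ, StrictMono φ ∧
        Tendsto (fun k => (f^[φ k] w₀).arg) atTop (nhds s)} :=
  subseqLimits_eq_of_tendsto_dist <|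
    tendsto_dist_arg_of_pseudoHyperbolicDist_tendsto_zero
      (fun n => hmaps.iterate n hz₀) (fun n => hmaps.iterate n hw₀) hρ

/-- For a holomorphic self-map `f` of the upper half-plane and points
`z₀, w₀` whose orbits tend to `∞` in modulus with pseudo-hyperbolic distance between
the orbits tending to `0`, the sets of limit points of the arguments of the two orbits
(`Slope[f, z₀]` and `Slope[f, w₀]`) coincide. -/
theorem slope_set_eq_of_pseudoHyperbolic_tendsto_zero (f : ℂ → ℂ)
    (hf : DifferentiableOn ℂ f {z : ℂ | 0 < z.im})
    (hmaps : Set.MapsTo f {z : ℂ | 0 < z.im} {z : ℂ | 0 < z.im})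
    (z₀ w₀ : ℂ) (hz₀ : 0 < z₀.im) (hw₀ : 0 < w₀.im)
    (hzabs : Tendsto (fun n => ‖f^[n] z₀‖) atTop atTop)
    (hwabs : Tendsto (fun n => ‖f^[n] w₀‖) atTop atTop)
    (hρ : Tendsto (fun n => ‖f^[n] z₀ - f^[n] w₀‖ /
      ‖f^[n] z₀ - (starRingEnd ℂ) (f^[n] w₀)‖) atTop (nhds 0)) :
    {s : ℝ | ∃ φ : ℕ → ℕ, StrictMono φ ∧
        Tendsto (fun k => (f^[φ k] z₀).arg) atTop (nhds s)} =
      {s : ℝ | ∃ φ : ℕ → ℕ, StrictMono φ ∧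
        Tendsto (fun k => (f^[φ k] w₀).arg) atTop (nhds s)} :=
  slope_set_eq_of_pseudoHyperbolic_tendsto_zero_general f hmaps z₀ w₀ hz₀ hw₀ hρ
end

section
/- Let (a_k) ⊂ (0,∞) and (γ_k) ⊂ (0,∞) be sequences satisfying: Σ_k a_k/γ_k < ∞; γ_1 ≥ 1 and 4γ_k ≤ γ_{k+1} for all k; Σ_{l=1}^{k} a_l ≤ γ_k/(24k) and Σ_{l=k+1}^{∞} a_l/γ_l ≤ γ_k/(24k) for all k; and Σ_{l=1}^{k−1} a_l ≤ a_k/(64k²) and Σ_{l=k+1}^{∞} a_l/γ_l ≤ a_k/(100 k² γ_k) for all k. Define f(z) = z + Σ_{k=1}^{∞} a_k/(γ_k − z) on ℍ and set z_n = x_n + i y_n = f^[n](i). Fix k ∈ ℕ and let Ω = {x + iy ∈ ℂ : γ_k/2 ≤ x ≤ 3γ_k/2, 1 ≤ y ≤ k·γ_k}. If N ≤ M are natural numbers such that z_n ∈ Ω for all N ≤ n ≤ M and z_{M+1} ∉ Ω, then γ_k/2 ≤ x_{M+1} ≤ 3γ_k/2 and y_{M+1} > k·γ_k. -/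
/-!
For `z` in the box `Ω`, the term `a_k / (γ_k - z)` dominates the rest of the series: poles
`γ_n` with `n < k` lie at distance `≥ γ_k / 4` to the left of `z`, and the terms with `n > k` are
controlled by the tail `∑_{n > k} a_n / γ_n`. Hence `f` pushes `z` to the right when
`x ≤ 3γ_k/4` and to the left when `x ≥ 5γ_k/4`, while `f(z) - z` has size at most `γ_k / 4`;
so the orbit cannot leave the vertical strip `γ_k/2 ≤ x ≤ 3γ_k/2`. Since `Im f(z) ≥ Im z`, it
cannot leave `Ω` through the bottom either, so it leaves through the top.
-/

noncomputable def poleTerm (a γ : ℕ → ℝ) (z : ℂ) (n : ℕ) : ℂ :=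
  (a n : ℂ) / ((γ n : ℂ) - z)

/-- The poles are indexed from `1`: `poleSeries a γ z = ∑_{n ≥ 1} a n / (γ n - z)`. -/
noncomputable def poleSeries (a γ : ℕ → ℝ) (z : ℂ) : ℂ :=
  ∑' l : ℕ, poleTerm a γ z (l + 1)

structure LacunaryPoles (a γ : ℕ → ℝ) : Prop where
  a_pos : ∀ k, 1 ≤ k → 0 < a k
  γ_pos : ∀ k, 1 ≤ k → 0 < γ k
  four_mul_le_succ : ∀ k, 1 ≤ k → 4 * γ k ≤ γ (k + 1)
  summable : Summable fun k : ℕ => a (k + 1) / γ (k + 1)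

section PoleTerm

variable {a γ : ℕ → ℝ} {z : ℂ} {n : ℕ}

lemma poleTerm_re (a γ : ℕ → ℝ) (z : ℂ) (n : ℕ) :
    (poleTerm a γ z n).re = a n * (γ n - z.re) / ((γ n - z.re) ^ 2 + z.im ^ 2) := by
  simp only [poleTerm, Complex.div_re, Complex.normSq_apply, Complex.ofReal_re,
    Complex.ofReal_im, Complex.sub_re, Complex.sub_im]
  ring

lemma poleTerm_im (a γ : ℕ → ℝ) (z : ℂ) (n : ℕ) :
    (poleTerm a γ z n).im = a n * z.im / ((γ n - z.re) ^ 2 + z.im ^ 2) := by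
  simp only [poleTerm, Complex.div_im, Complex.normSq_apply, Complex.ofReal_re,
    Complex.ofReal_im, Complex.sub_re, Complex.sub_im]
  ring

lemma norm_poleTerm_le_div_abs_sub_re (ha : 0 ≤ a n) (hz : z.re ≠ γ n) :
    ‖poleTerm a γ z n‖ ≤ a n / |γ n - z.re| := by
  rw [poleTerm, norm_div, Complex.norm_real, Real.norm_of_nonneg ha]
  have hpos : 0 < |γ n - z.re| := abs_pos.2 (sub_ne_zero.2 hz.symm)
  gcongr
  simpa using Complex.abs_re_le_norm ((γ n : ℂ) - z)

lemma norm_poleTerm_le_div_im (ha : 0 ≤ a n) (hz : 0 < z.im) :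
    ‖poleTerm a γ z n‖ ≤ a n / z.im := by
  rw [poleTerm, norm_div, Complex.norm_real, Real.norm_of_nonneg ha]
  gcongr
  simpa [abs_of_pos hz] using Complex.abs_im_le_norm ((γ n : ℂ) - z)

lemma div_le_mul_div_sq_add_sq {a c d y k : ℝ} (ha : 0 ≤ a) (hk : 1 ≤ k) (hd₁ : c / 4 ≤ d)
    (hd₂ : d ≤ c / 2) (hy₀ : 0 ≤ y) (hy : y ≤ k * c) :
    a / (8 * k ^ 2 * c) ≤ a * d / (d ^ 2 + y ^ 2) := by
  rcases (show 0 ≤ c by linarith).eq_or_lt with rfl | hc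
  · simp only [mul_zero, div_zero]
    exact div_nonneg (mul_nonneg ha (by linarith)) (by positivity)
  have hd : 0 < d := by linarith
  have hy2 : y ^ 2 ≤ k ^ 2 * c ^ 2 := by nlinarith
  have hk2 : c ^ 2 ≤ k ^ 2 * c ^ 2 := le_mul_of_one_le_left (sq_nonneg c) (by nlinarith)
  have hden : d ^ 2 + y ^ 2 ≤ 8 * k ^ 2 * c * d := by
    nlinarith [pow_le_pow_left₀ hd.le hd₂ 2,
      mul_le_mul_of_nonneg_left hd₁ (by positivity : 0 ≤ k ^ 2 * c)]
  rw [div_le_div_iff₀ (by positivity) (by positivity)]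
  nlinarith [mul_le_mul_of_nonneg_left hden ha]

lemma div_le_re_poleTerm {k : ℕ} (ha : 0 ≤ a k) (hk : 1 ≤ k) (hx₁ : γ k / 4 ≤ γ k - z.re)
    (hx₂ : γ k - z.re ≤ γ k / 2) (hy₀ : 0 ≤ z.im) (hy : z.im ≤ k * γ k) :
    a k / (8 * (k : ℝ) ^ 2 * γ k) ≤ (poleTerm a γ z k).re := by
  rw [poleTerm_re]
  exact div_le_mul_div_sq_add_sq ha (by exact_mod_cast hk) hx₁ hx₂ hy₀ hy

lemma re_poleTerm_le_neg_div {k : ℕ} (ha : 0 ≤ a k) (hk : 1 ≤ k) (hx₁ : γ k / 4 ≤ z.re - γ k)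
    (hx₂ : z.re - γ k ≤ γ k / 2) (hy₀ : 0 ≤ z.im) (hy : z.im ≤ k * γ k) :
    (poleTerm a γ z k).re ≤ -(a k / (8 * (k : ℝ) ^ 2 * γ k)) := by
  have := div_le_mul_div_sq_add_sq ha (by exact_mod_cast hk) hx₁ hx₂ hy₀ hy
  rw [poleTerm_re, show γ k - z.re = -(z.re - γ k) by ring, neg_sq, mul_neg, neg_div]
  linarith

end PoleTerm

lemma poleSeries_eq_sum_add_tsum {a γ : ℕ → ℝ} {z : ℂ}
    (hs : Summable fun l : ℕ => poleTerm a γ z (l + 1)) (k : ℕ) :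
    poleSeries a γ z =
      ∑ n ∈ Finset.Icc 1 k, poleTerm a γ z n + ∑' l : ℕ, poleTerm a γ z (k + 1 + l) := by
  rw [poleSeries, ← hs.sum_add_tsum_nat_add k, Finset.range_eq_Ico, Finset.sum_Ico_add',
    zero_add, Finset.Ico_add_one_right_eq_Icc]
  congr 1
  exact tsum_congr fun l => by rw [show l + k + 1 = k + 1 + l by omega]

lemma im_poleSeries_nonneg {a γ : ℕ → ℝ} {z : ℂ} (ha : ∀ n, 1 ≤ n → 0 ≤ a n)
    (hz : 0 ≤ z.im) : 0 ≤ (poleSeries a γ z).im := by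
  by_cases hs : Summable fun l : ℕ => poleTerm a γ z (l + 1)
  · rw [poleSeries, Complex.im_tsum hs]
    refine tsum_nonneg fun l => ?_
    rw [poleTerm_im]
    have := ha (l + 1) l.succ_pos
    positivity
  · simp [poleSeries, tsum_eq_zero_of_not_summable hs]

namespace LacunaryPoles

variable {a γ : ℕ → ℝ} {z : ℂ} {k : ℕ}

lemma four_mul_le_of_lt (h : LacunaryPoles a γ) {m n : ℕ} (hm : 1 ≤ m) (hmn : m < n) :
    4 * γ m ≤ γ n := by
  induction n, hmn using Nat.le_induction with
  | base => exact h.four_mul_le_succ m hm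
  | succ n hn ih =>
    linarith [h.four_mul_le_succ n (by omega), h.γ_pos n (by omega)]

lemma norm_poleTerm_le_of_lt (h : LacunaryPoles a γ) (hk : 1 ≤ k) (hz : z.re ≤ 3 * γ k / 2)
    {n : ℕ} (hn : k < n) : ‖poleTerm a γ z n‖ ≤ 8 / 5 * (a n / γ n) := by
  have hγn := h.γ_pos n (by omega)
  have hgap : 5 / 8 * γ n ≤ γ n - z.re := by linarith [h.four_mul_le_of_lt hk hn]
  calc ‖poleTerm a γ z n‖ ≤ a n / |γ n - z.re| :=
        norm_poleTerm_le_div_abs_sub_re (h.a_pos n (by omega)).le (by linarith)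
    _ ≤ a n / (5 / 8 * γ n) := by
        rw [abs_of_pos (by linarith)]
        gcongr
        exact (h.a_pos n (by omega)).le
    _ = 8 / 5 * (a n / γ n) := by field_simp

lemma summable_tail (h : LacunaryPoles a γ) (k : ℕ) :
    Summable fun l : ℕ => a (k + 1 + l) / γ (k + 1 + l) := by
  refine ((summable_nat_add_iff k).2 h.summable).congr fun l => ?_
  rw [show l + k + 1 = k + 1 + l by omega]

lemma summable_poleTerm (h : LacunaryPoles a γ) (hk : 1 ≤ k) (hz : z.re ≤ 3 * γ k / 2) :
    Summable fun l : ℕ => poleTerm a γ z (l + 1) :=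
  (h.summable.mul_left (8 / 5)).of_norm_bounded_eventually_nat <|
    Filter.eventually_atTop.2 ⟨k, fun l hl => h.norm_poleTerm_le_of_lt hk hz (by omega)⟩

lemma norm_tsum_poleTerm_tail_le (h : LacunaryPoles a γ) (hk : 1 ≤ k) (hz : z.re ≤ 3 * γ k / 2) :
    ‖∑' l : ℕ, poleTerm a γ z (k + 1 + l)‖ ≤ 8 / 5 * ∑' l : ℕ, a (k + 1 + l) / γ (k + 1 + l) := by
  rw [← tsum_mul_left]
  exact tsum_of_norm_bounded ((h.summable_tail k).mul_left _).hasSum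
    fun l => h.norm_poleTerm_le_of_lt hk hz (by omega)

lemma norm_poleSeries_le (h : LacunaryPoles a γ) (hk : 1 ≤ k) (hx : z.re ≤ 3 * γ k / 2)
    (hy : 1 ≤ z.im) (hsmall₁ : ∑ l ∈ Finset.Icc 1 k, a l ≤ γ k / (24 * (k : ℝ)))
    (hsmall₂ : ∑' l : ℕ, a (k + 1 + l) / γ (k + 1 + l) ≤ γ k / (24 * (k : ℝ))) :
    ‖poleSeries a γ z‖ ≤ γ k / 4 := by
  have hfront : ‖∑ n ∈ Finset.Icc 1 k, poleTerm a γ z n‖ ≤ ∑ n ∈ Finset.Icc 1 k, a n := by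
    refine (norm_sum_le _ _).trans (Finset.sum_le_sum fun n hn => ?_)
    have ha := (h.a_pos n (Finset.mem_Icc.1 hn).1).le
    calc ‖poleTerm a γ z n‖ ≤ a n / z.im := norm_poleTerm_le_div_im ha (by linarith)
      _ ≤ a n := div_le_self ha hy
  have hγk : γ k / (24 * (k : ℝ)) ≤ γ k / 24 := by
    have hk' : (1 : ℝ) ≤ k := by exact_mod_cast hk
    gcongr
    · exact (h.γ_pos k hk).le
    · linarith
  rw [poleSeries_eq_sum_add_tsum (h.summable_poleTerm hk hx) k]
  linarith [norm_add_le (∑ n ∈ Finset.Icc 1 k, poleTerm a γ z n)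
    (∑' l : ℕ, poleTerm a γ z (k + 1 + l)), h.norm_tsum_poleTerm_tail_le hk hx, h.γ_pos k hk]

lemma norm_sum_poleTerm_Icc_le (h : LacunaryPoles a γ) (hx : γ k / 2 ≤ z.re) :
    ‖∑ n ∈ Finset.Icc 1 (k - 1), poleTerm a γ z n‖ ≤
      4 / γ k * ∑ n ∈ Finset.Icc 1 (k - 1), a n := by
  rw [Finset.mul_sum]
  refine (norm_sum_le _ _).trans (Finset.sum_le_sum fun n hn => ?_)
  obtain ⟨hn₁, hn₂⟩ := Finset.mem_Icc.1 hn
  have hγk := h.γ_pos k (by omega)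
  have hgap : γ k / 4 ≤ z.re - γ n := by linarith [h.four_mul_le_of_lt hn₁ (by omega : n < k)]
  have ha := (h.a_pos n hn₁).le
  calc ‖poleTerm a γ z n‖ ≤ a n / |γ n - z.re| :=
        norm_poleTerm_le_div_abs_sub_re ha (by linarith)
    _ ≤ a n / (γ k / 4) := by
        rw [abs_sub_comm, abs_of_pos (by linarith)]
        gcongr
    _ = 4 / γ k * a n := by field_simp

lemma norm_poleSeries_sub_poleTerm_le (h : LacunaryPoles a γ) (hk : 1 ≤ k)
    (hx₁ : γ k / 2 ≤ z.re) (hx₂ : z.re ≤ 3 * γ k / 2)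
    (hctrl₁ : ∑ l ∈ Finset.Icc 1 (k - 1), a l ≤ a k / (64 * (k : ℝ) ^ 2))
    (hctrl₂ : ∑' l : ℕ, a (k + 1 + l) / γ (k + 1 + l) ≤ a k / (100 * (k : ℝ) ^ 2 * γ k)) :
    ‖poleSeries a γ z - poleTerm a γ z k‖ ≤ a k / (8 * (k : ℝ) ^ 2 * γ k) := by
  obtain ⟨j, rfl⟩ : ∃ j, k = j + 1 := ⟨k - 1, by omega⟩
  have hγk := h.γ_pos (j + 1) hk
  have hak := h.a_pos (j + 1) hk
  rw [poleSeries_eq_sum_add_tsum (h.summable_poleTerm hk hx₂) (j + 1),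
    Finset.sum_Icc_succ_top (by omega), add_sub_right_comm, add_sub_cancel_right]
  have hfront := (h.norm_sum_poleTerm_Icc_le hx₁).trans
    (mul_le_mul_of_nonneg_left hctrl₁ (by positivity))
  have htail := (h.norm_tsum_poleTerm_tail_le hk hx₂).trans
    (mul_le_mul_of_nonneg_left hctrl₂ (by norm_num))
  rw [Nat.add_sub_cancel] at hfront
  have hK : (0 : ℝ) < (j + 1 : ℕ) := by positivity
  calc _ ≤ _ := norm_add_le _ _
    _ ≤ 4 / γ (j + 1) * (a (j + 1) / (64 * ((j + 1 : ℕ) : ℝ) ^ 2)) +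
        8 / 5 * (a (j + 1) / (100 * ((j + 1 : ℕ) : ℝ) ^ 2 * γ (j + 1))) := add_le_add hfront htail
    _ ≤ _ := by
        -- `1 / 16 + 2 / 125 ≤ 1 / 8`
        field_simp
        nlinarith

lemma re_add_poleSeries_mem_Icc (h : LacunaryPoles a γ) (hk : 1 ≤ k)
    (hx₁ : γ k / 2 ≤ z.re) (hx₂ : z.re ≤ 3 * γ k / 2) (hy₁ : 1 ≤ z.im) (hy₂ : z.im ≤ k * γ k)
    (hsmall₁ : ∑ l ∈ Finset.Icc 1 k, a l ≤ γ k / (24 * (k : ℝ)))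
    (hsmall₂ : ∑' l : ℕ, a (k + 1 + l) / γ (k + 1 + l) ≤ γ k / (24 * (k : ℝ)))
    (hctrl₁ : ∑ l ∈ Finset.Icc 1 (k - 1), a l ≤ a k / (64 * (k : ℝ) ^ 2))
    (hctrl₂ : ∑' l : ℕ, a (k + 1 + l) / γ (k + 1 + l) ≤ a k / (100 * (k : ℝ) ^ 2 * γ k)) :
    (z + poleSeries a γ z).re ∈ Set.Icc (γ k / 2) (3 * γ k / 2) := by
  have hγk := h.γ_pos k hk
  have hak := (h.a_pos k hk).le
  have hsize := abs_le.1 <| (Complex.abs_re_le_norm _).trans <|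
    h.norm_poleSeries_le hk hx₂ hy₁ hsmall₁ hsmall₂
  have hrest := abs_le.1 <| (Complex.abs_re_le_norm _).trans <|
    h.norm_poleSeries_sub_poleTerm_le hk hx₁ hx₂ hctrl₁ hctrl₂
  rw [Complex.sub_re] at hrest
  rw [Complex.add_re]
  constructor
  · rcases le_or_gt z.re (3 * γ k / 4) with hx | hx
    · have := div_le_re_poleTerm hak hk (by linarith) (by linarith) (by linarith) hy₂
      linarith
    · linarith
  · rcases le_or_gt (5 * γ k / 4) z.re with hx | hx
    · have := re_poleTerm_le_neg_div hak hk (by linarith) (by linarith) (by linarith) hy₂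
      linarith
    · linarith

end LacunaryPoles

theorem elevator_lemma_general (a γ : ℕ → ℝ)
    (hapos : ∀ k : ℕ, 1 ≤ k → 0 < a k)
    (hγpos : ∀ k : ℕ, 1 ≤ k → 0 < γ k)
    (hsum : Summable (fun k : ℕ => a (k + 1) / γ (k + 1)))
    (hγgrow : ∀ k : ℕ, 1 ≤ k → 4 * γ k ≤ γ (k + 1))
    (hsmall₁ : ∀ k : ℕ, 1 ≤ k → ∑ l ∈ Finset.Icc 1 k, a l ≤ γ k / (24 * (k : ℝ)))
    (hsmall₂ : ∀ k : ℕ, 1 ≤ k →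
      (∑' l : ℕ, a (k + 1 + l) / γ (k + 1 + l)) ≤ γ k / (24 * (k : ℝ)))
    (hctrl₁ : ∀ k : ℕ, 1 ≤ k →
      ∑ l ∈ Finset.Icc 1 (k - 1), a l ≤ a k / (64 * (k : ℝ) ^ 2))
    (hctrl₂ : ∀ k : ℕ, 1 ≤ k →
      (∑' l : ℕ, a (k + 1 + l) / γ (k + 1 + l)) ≤ a k / (100 * (k : ℝ) ^ 2 * γ k))
    (f : ℂ → ℂ)
    (hfdef : ∀ z : ℂ, f z = z + ∑' k : ℕ, (a (k + 1) : ℂ) / ((γ (k + 1) : ℂ) - z))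
    (k : ℕ) (hk : 1 ≤ k)
    (Ω : Set ℂ)
    (hΩ : Ω = {z : ℂ | γ k / 2 ≤ z.re ∧ z.re ≤ 3 * γ k / 2 ∧
      1 ≤ z.im ∧ z.im ≤ (k : ℝ) * γ k})
    (N M : ℕ) (hNM : N ≤ M)
    (horb : ∀ n : ℕ, N ≤ n → n ≤ M → f^[n] Complex.I ∈ Ω)
    (hout : f^[M + 1] Complex.I ∉ Ω) :
    γ k / 2 ≤ (f^[M + 1] Complex.I).re ∧
    (f^[M + 1] Complex.I).re ≤ 3 * γ k / 2 ∧
    (k : ℝ) * γ k < (f^[M + 1] Complex.I).im := by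
  have hpoles : LacunaryPoles a γ := ⟨hapos, hγpos, hγgrow, hsum⟩
  set z := f^[M] Complex.I
  have hstep : f^[M + 1] Complex.I = z + poleSeries a γ z := by
    rw [Function.iterate_succ_apply', hfdef]
    rfl
  have hz : z ∈ Ω := horb M hNM le_rfl
  rw [hΩ] at hz hout
  obtain ⟨hx₁, hx₂, hy₁, hy₂⟩ := hz
  obtain ⟨hre₁, hre₂⟩ := hpoles.re_add_poleSeries_mem_Icc hk hx₁ hx₂ hy₁ hy₂ (hsmall₁ k hk)
    (hsmall₂ k hk) (hctrl₁ k hk) (hctrl₂ k hk)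
  have him : z.im ≤ (z + poleSeries a γ z).im := by
    rw [Complex.add_im]
    linarith [im_poleSeries_nonneg (γ := γ) (fun n hn => (hapos n hn).le) (by linarith : 0 ≤ z.im)]
  rw [hstep] at hout ⊢
  exact ⟨hre₁, hre₂, lt_of_not_ge fun hy => hout ⟨hre₁, hre₂, hy₁.trans him, hy⟩⟩

/-- the "elevator" lemma for the example with slope set `[0, π/2]`. Under
the summability and growth conditions on `(a_k)` and positive `(γ_k)`, fix `k` and let
`Ω = {x + iy : γ_k/2 ≤ x ≤ 3γ_k/2, 1 ≤ y ≤ k γ_k}`. If the orbit `z_n = f^[n](i)`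
stays in `Ω` for `N ≤ n ≤ M` and `z_{M+1} ∉ Ω`, then `γ_k/2 ≤ x_{M+1} ≤ 3γ_k/2` and
`y_{M+1} > k γ_k`. -/
theorem elevator_lemma (a γ : ℕ → ℝ)
    (hapos : ∀ k : ℕ, 1 ≤ k → 0 < a k)
    (hγpos : ∀ k : ℕ, 1 ≤ k → 0 < γ k)
    (hsum : Summable (fun k : ℕ => a (k + 1) / γ (k + 1)))
    (hγ1 : 1 ≤ γ 1)
    (hγgrow : ∀ k : ℕ, 1 ≤ k → 4 * γ k ≤ γ (k + 1))
    (hsmall₁ : ∀ k : ℕ, 1 ≤ k → ∑ l ∈ Finset.Icc 1 k, a l ≤ γ k / (24 * (k : ℝ)))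
    (hsmall₂ : ∀ k : ℕ, 1 ≤ k →
      (∑' l : ℕ, a (k + 1 + l) / γ (k + 1 + l)) ≤ γ k / (24 * (k : ℝ)))
    (hctrl₁ : ∀ k : ℕ, 1 ≤ k →
      ∑ l ∈ Finset.Icc 1 (k - 1), a l ≤ a k / (64 * (k : ℝ) ^ 2))
    (hctrl₂ : ∀ k : ℕ, 1 ≤ k →
      (∑' l : ℕ, a (k + 1 + l) / γ (k + 1 + l)) ≤ a k / (100 * (k : ℝ) ^ 2 * γ k))
    (f : ℂ → ℂ)
    (hfdef : ∀ z : ℂ, f z = z + ∑' k : ℕ, (a (k + 1) : ℂ) / ((γ (k + 1) : ℂ) - z))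
    (k : ℕ) (hk : 1 ≤ k)
    (Ω : Set ℂ)
    (hΩ : Ω = {z : ℂ | γ k / 2 ≤ z.re ∧ z.re ≤ 3 * γ k / 2 ∧
      1 ≤ z.im ∧ z.im ≤ (k : ℝ) * γ k})
    (N M : ℕ) (hNM : N ≤ M)
    (horb : ∀ n : ℕ, N ≤ n → n ≤ M → f^[n] Complex.I ∈ Ω)
    (hout : f^[M + 1] Complex.I ∉ Ω) :
    γ k / 2 ≤ (f^[M + 1] Complex.I).re ∧
    (f^[M + 1] Complex.I).re ≤ 3 * γ k / 2 ∧
    (k : ℝ) * γ k < (f^[M + 1] Complex.I).im :=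
  elevator_lemma_general a γ hapos hγpos hsum hγgrow hsmall₁ hsmall₂ hctrl₁ hctrl₂ f hfdef k hk Ω hΩ
    N M hNM horb hout
end
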